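/- arXiv:1804.08111 — 3 statements merged into one kernel-verified Lean document; each statement's English description precedes it below -/
import Mathlib

section
/- Let p ∈ (0,1), q ≥ 1, and ε ∈ (0, 1/q). Let G = (V,E) be a finite graph and u, v vertices with {u,v} ∉ E such that φ_G(u↔v) ≤ ε, and let G' = (V, E ∪ {{u,v}}). Then the partition functions of the random-cluster model with parameters p, q satisfy |(p/q + 1 − p)·Z^{rc}_G / Z^{rc}_{G'} − 1| ≤ qε. -/
open scoped Classical

/-- Number of connected components of the spanning subgraph of `V` with edge set `S`
(isolated vertices count). -/
noncomputable def rcK {V : Type} [Fintype V] (S : Finset (Sym2 V)) : ℕ :=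
  Nat.card (SimpleGraph.fromEdgeSet (↑S : Set (Sym2 V))).ConnectedComponent

/-- Random-cluster weight of the configuration `S ⊆ E`. -/
noncomputable def rcW {V : Type} [Fintype V] (E : Finset (Sym2 V)) (p q : ℝ)
    (S : Finset (Sym2 V)) : ℝ :=
  p ^ S.card * (1 - p) ^ (E \ S).card * q ^ rcK S

/-- Random-cluster partition function. -/
noncomputable def rcZ {V : Type} [Fintype V] (E : Finset (Sym2 V)) (p q : ℝ) : ℝ :=
  ∑ S ∈ E.powerset, rcW E p q S

/-- Random-cluster probability of the configuration `S ⊆ E`. -/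
noncomputable def rcP {V : Type} [Fintype V] (E : Finset (Sym2 V)) (p q : ℝ)
    (S : Finset (Sym2 V)) : ℝ :=
  rcW E p q S / rcZ E p q

/-!
Split the configurations of `E ∪ {uv}` according to whether they contain `uv`. For `S ⊆ E`,
adding `uv` to `S` merges two clusters unless `u ↔ v` already holds in `S`, so
`W'(S) + W'(S ∪ {uv}) = (p/q + 1 - p) W(S) + (p - p/q) W(S) 1[u ↔ v in S]`. Summing,
`Z' = (p/q + 1 - p) Z + (p - p/q) A` with `A = Z φ(u ↔ v) ≤ ε Z`, and since
`p - p/q ≤ q (p/q + 1 - p)` the relative error `(p - p/q) A / Z'` is at most `q ε`.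
-/

namespace SimpleGraph

variable {V : Type} {G : SimpleGraph V} {u v : V}

lemma Reachable.of_sup_edge {a b : V} (h : (G ⊔ edge u v).Reachable a b) :
    G.Reachable a b ∨ (G.Reachable a u ∧ G.Reachable v b) ∨
      (G.Reachable a v ∧ G.Reachable u b) := by
  obtain ⟨w⟩ := h
  induction w with
  | nil => exact Or.inl .rfl
  | @cons a c b hadj _ ih =>
    rcases hadj with hadj | hadj
    · rcases ih with h | ⟨h₁, h₂⟩ | ⟨h₁, h₂⟩
      · exact Or.inl (hadj.reachable.trans h)
      · exact Or.inr (Or.inl ⟨hadj.reachable.trans h₁, h₂⟩)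
      · exact Or.inr (Or.inr ⟨hadj.reachable.trans h₁, h₂⟩)
    · obtain ⟨⟨rfl, rfl⟩ | ⟨rfl, rfl⟩, -⟩ := (edge_adj _ _ _ _).mp hadj
      · rcases ih with h | ⟨h₁, h₂⟩ | ⟨-, h₂⟩
        · exact Or.inr (Or.inl ⟨.rfl, h⟩)
        · exact Or.inl (h₁.symm.trans h₂)
        · exact Or.inl h₂
      · rcases ih with h | ⟨-, h₂⟩ | ⟨h₁, h₂⟩
        · exact Or.inr (Or.inr ⟨.rfl, h⟩)
        · exact Or.inl h₂
        · exact Or.inl (h₁.symm.trans h₂)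

lemma card_connectedComponent_sup_edge_of_reachable (huv : G.Reachable u v) :
    Nat.card (G ⊔ edge u v).ConnectedComponent = Nat.card G.ConnectedComponent := by
  refine (Nat.card_eq_of_bijective _
    ⟨?_, ConnectedComponent.surjective_map_ofLE le_sup_left⟩).symm
  refine ConnectedComponent.ind₂ fun a b hab => ConnectedComponent.sound ?_
  rw [ConnectedComponent.map_mk, ConnectedComponent.map_mk, ConnectedComponent.eq] at hab
  rcases hab.of_sup_edge with h | ⟨h₁, h₂⟩ | ⟨h₁, h₂⟩
  · exact h
  · exact (h₁.trans huv).trans h₂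
  · exact (h₁.trans huv.symm).trans h₂

/-- Away from the component of `v`, the map of components into `G ⊔ edge u v` is a bijection. -/
lemma card_connectedComponent_sup_edge_of_not_reachable [Finite V] (huv : ¬G.Reachable u v) :
    Nat.card (G ⊔ edge u v).ConnectedComponent + 1 = Nat.card G.ConnectedComponent := by
  set f := ConnectedComponent.map (Hom.ofLE (le_sup_left : G ≤ G ⊔ edge u v))
  have hadj : (G ⊔ edge u v).Adj u v :=
    Or.inr ((edge_adj u v u v).mpr ⟨Or.inl ⟨rfl, rfl⟩, fun h => huv (h ▸ .rfl)⟩)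
  have hinj : ∀ c₁ c₂ : G.ConnectedComponent, c₁ ≠ G.connectedComponentMk v →
      c₂ ≠ G.connectedComponentMk v → f c₁ = f c₂ → c₁ = c₂ := by
    refine ConnectedComponent.ind₂ fun a b ha hb hab => ConnectedComponent.sound ?_
    simp only [f, ConnectedComponent.map_mk, ConnectedComponent.eq] at hab
    rcases hab.of_sup_edge with h | ⟨-, h₂⟩ | ⟨h₁, -⟩
    · exact h
    · exact absurd (ConnectedComponent.sound h₂.symm) hb
    · exact absurd (ConnectedComponent.sound h₁) ha
  have hsurj : ∀ c, ∃ c' : {c // c ≠ G.connectedComponentMk v}, f c' = c := by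
    refine ConnectedComponent.ind fun a => ?_
    by_cases hav : G.Reachable a v
    · refine ⟨⟨G.connectedComponentMk u, fun h => huv (ConnectedComponent.exact h)⟩, ?_⟩
      exact ConnectedComponent.sound (hadj.reachable.trans (hav.symm.mono le_sup_left))
    · exact ⟨⟨G.connectedComponentMk a, fun h => hav (ConnectedComponent.exact h)⟩, rfl⟩
  have hcard := Nat.card_eq_of_bijective (fun c : {c // c ≠ G.connectedComponentMk v} => f c)
    ⟨fun c₁ c₂ h => Subtype.ext (hinj c₁ c₂ c₁.2 c₂.2 h), hsurj⟩
  have := Fintype.ofFinite G.ConnectedComponent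
  rw [← hcard, Nat.card_eq_fintype_card, Nat.card_eq_fintype_card, Fintype.card_subtype_compl,
    Fintype.card_subtype_eq]
  have : 0 < Fintype.card G.ConnectedComponent :=
    Fintype.card_pos_iff.mpr ⟨G.connectedComponentMk v⟩
  omega

lemma fromEdgeSet_insert (s : Set (Sym2 V)) :
    fromEdgeSet (insert s(u, v) s) = fromEdgeSet s ⊔ edge u v := by
  rw [Set.insert_eq, fromEdgeSet_union, sup_comm]
  rfl

end SimpleGraph

open SimpleGraph

section RandomCluster

variable {V : Type} [Fintype V]

noncomputable def rcZConnected (E : Finset (Sym2 V)) (p q : ℝ) (u v : V) : ℝ :=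
  ∑ S ∈ E.powerset, if (fromEdgeSet (↑S : Set (Sym2 V))).Reachable u v then rcW E p q S else 0

lemma rcZConnected_div_rcZ (E : Finset (Sym2 V)) (p q : ℝ) (u v : V) :
    rcZConnected E p q u v / rcZ E p q = ∑ S ∈ E.powerset,
      if (fromEdgeSet (↑S : Set (Sym2 V))).Reachable u v then rcP E p q S else 0 := by
  rw [rcZConnected, Finset.sum_div]
  refine Finset.sum_congr rfl fun S _ => ?_
  split
  · rfl
  · exact zero_div _

lemma rcK_insert_of_reachable {S : Finset (Sym2 V)} {u v : V}
    (h : (fromEdgeSet (↑S : Set (Sym2 V))).Reachable u v) : rcK (insert s(u, v) S) = rcK S := by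
  rw [rcK, Finset.coe_insert, fromEdgeSet_insert]
  exact card_connectedComponent_sup_edge_of_reachable h

lemma rcK_insert_add_one_of_not_reachable {S : Finset (Sym2 V)} {u v : V}
    (h : ¬(fromEdgeSet (↑S : Set (Sym2 V))).Reachable u v) :
    rcK (insert s(u, v) S) + 1 = rcK S := by
  rw [rcK, Finset.coe_insert, fromEdgeSet_insert]
  exact card_connectedComponent_sup_edge_of_not_reachable h

variable {E : Finset (Sym2 V)} {p q : ℝ}

lemma rcW_pos (hp : p ∈ Set.Ioo (0 : ℝ) 1) (hq : 0 < q) (S : Finset (Sym2 V)) :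
    0 < rcW E p q S :=
  mul_pos (mul_pos (pow_pos hp.1 _) (pow_pos (sub_pos.mpr hp.2) _)) (pow_pos hq _)

lemma rcZ_pos (hp : p ∈ Set.Ioo (0 : ℝ) 1) (hq : 0 < q) : 0 < rcZ E p q :=
  Finset.sum_pos (fun S _ => rcW_pos hp hq S) ⟨∅, Finset.empty_mem_powerset E⟩

lemma rcZConnected_nonneg (hp : p ∈ Set.Ioo (0 : ℝ) 1) (hq : 0 < q) (u v : V) :
    0 ≤ rcZConnected E p q u v :=
  Finset.sum_nonneg fun S _ => ite_nonneg (rcW_pos hp hq S).le le_rfl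

lemma rcW_insert_add_rcW_insert_insert (hq : q ≠ 0) {u v : V} (he : s(u, v) ∉ E)
    {S : Finset (Sym2 V)} (hS : S ⊆ E) :
    rcW (insert s(u, v) E) p q S + rcW (insert s(u, v) E) p q (insert s(u, v) S) =
      (p / q + 1 - p) * rcW E p q S + (p - p / q) *
        if (fromEdgeSet (↑S : Set (Sym2 V))).Reachable u v then rcW E p q S else 0 := by
  have heS : s(u, v) ∉ S := fun h => he (hS h)
  rw [rcW, rcW, rcW, Finset.insert_sdiff_of_notMem _ heS, Finset.insert_sdiff_insert,
    Finset.sdiff_insert_of_notMem he,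
    Finset.card_insert_of_notMem (fun h => he (Finset.mem_sdiff.mp h).1),
    Finset.card_insert_of_notMem heS]
  split
  case isTrue h =>
    rw [rcK_insert_of_reachable h]
    field_simp
    ring
  case isFalse h =>
    rw [← rcK_insert_add_one_of_not_reachable h]
    field_simp
    ring

lemma rcZ_insert (hq : q ≠ 0) {u v : V} (he : s(u, v) ∉ E) :
    rcZ (insert s(u, v) E) p q =
      (p / q + 1 - p) * rcZ E p q + (p - p / q) * rcZConnected E p q u v := by
  rw [rcZ, Finset.sum_powerset_insert he, ← Finset.sum_add_distrib,
    Finset.sum_congr rfl fun S hS =>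
      rcW_insert_add_rcW_insert_insert hq he (Finset.mem_powerset.mp hS),
    Finset.sum_add_distrib, ← Finset.mul_sum, ← Finset.mul_sum, rcZ, rcZConnected]

end RandomCluster

lemma abs_mul_div_add_sub_one_le {Z A c t q ε : ℝ} (hZ : 0 < Z) (hA : 0 ≤ A)
    (hAε : A ≤ ε * Z) (hc : 0 < c) (ht : 0 ≤ t) (htc : t ≤ q * c) :
    |c * Z / (c * Z + t * A) - 1| ≤ q * ε := by
  have hD : 0 < c * Z + t * A := by positivity
  have hε : 0 ≤ ε := nonneg_of_mul_nonneg_left (hA.trans hAε) hZ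
  have hq : 0 ≤ q := nonneg_of_mul_nonneg_left (ht.trans htc) hc
  have herr : c * Z / (c * Z + t * A) - 1 = -(t * A / (c * Z + t * A)) := by
    field_simp
    ring
  rw [herr, abs_neg, abs_of_nonneg (by positivity), div_le_iff₀ hD]
  calc t * A ≤ q * c * (ε * Z) := mul_le_mul htc hAε hA (by positivity)
    _ ≤ q * ε * (c * Z + t * A) := by
      nlinarith [mul_nonneg (mul_nonneg hq hε) (mul_nonneg ht hA)]

theorem stmt4_general {V : Type} [Fintype V] (p : ℝ) (hp : p ∈ Set.Ioo (0 : ℝ) 1)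
    (q : ℝ) (hq : 1 ≤ q) (ε : ℝ)
    (E : Finset (Sym2 V))
    (u v : V) (he : s(u, v) ∉ E)
    (hconn : (∑ S ∈ E.powerset,
        if (SimpleGraph.fromEdgeSet (↑S : Set (Sym2 V))).Reachable u v
        then rcP E p q S else 0) ≤ ε) :
    |(p / q + 1 - p) * rcZ E p q / rcZ (insert s(u, v) E) p q - 1| ≤ q * ε := by
  have hq0 : 0 < q := by linarith
  have hZ := rcZ_pos (E := E) hp hq0
  rw [← rcZConnected_div_rcZ, div_le_iff₀ hZ] at hconn
  rw [rcZ_insert hq0.ne' he]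
  refine abs_mul_div_add_sub_one_le hZ (rcZConnected_nonneg hp hq0 u v) hconn ?_ ?_ ?_
  · have : 0 < p / q := div_pos hp.1 hq0
    linarith [hp.2]
  · exact sub_nonneg.mpr (div_le_self hp.1.le hq)
  · have : q * (p / q + 1 - p) = p + q * (1 - p) := by field_simp; ring
    rw [this]
    linarith [div_pos hp.1 hq0, mul_pos hq0 (sub_pos.mpr hp.2)]

theorem stmt4 {V : Type} [Fintype V] (p : ℝ) (hp : p ∈ Set.Ioo (0 : ℝ) 1)
    (q : ℝ) (hq : 1 ≤ q) (ε : ℝ) (hε : ε ∈ Set.Ioo (0 : ℝ) (1 / q))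
    (E : Finset (Sym2 V)) (hE : ∀ e ∈ E, ¬ e.IsDiag)
    (u v : V) (huv : u ≠ v) (he : s(u, v) ∉ E)
    (hconn : (∑ S ∈ E.powerset,
        if (SimpleGraph.fromEdgeSet (↑S : Set (Sym2 V))).Reachable u v
        then rcP E p q S else 0) ≤ ε) :
    |(p / q + 1 - p) * rcZ E p q / rcZ (insert s(u, v) E) p q - 1| ≤ q * ε :=
  stmt4_general p hp q hq ε E u v he hconn
end

section
/- Let q ≥ 3 be an integer and B ∈ (0,1), and set χ = (1+B)/(B+q−1). Let P be a path with ℓ ≥ 2 vertices and let Λ be a subset of the vertices of P that includes both endpoints of the path. Then for every configuration τ : Λ → [q], it holds that μ_P(P is bichromatic | σ_Λ = τ) ≤ (4q/B)^{|Λ|}·χ^{ℓ−2|Λ|}, where μ_P is the q-state Potts distribution on P with parameter B. -/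
open scoped Classical

/-- Number of monochromatic edges of the configuration `σ` in the graph `G`. -/
noncomputable def mEdges {W : Type} [Fintype W] (G : SimpleGraph W) {q : ℕ}
    (σ : W → Fin q) : ℕ :=
  (Finset.univ.filter fun e : Sym2 W => e ∈ G.edgeSet ∧ ∀ x ∈ e, ∀ y ∈ e, σ x = σ y).card

/-- Conditional probability of the event `A` given the event `C`, under the `q`-state
Potts distribution on `G` with parameter `B`. -/
noncomputable def pottsCond {W : Type} [Fintype W] (G : SimpleGraph W) (q : ℕ) (B : ℝ)
    (A C : Set (W → Fin q)) : ℝ :=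
  (∑ σ : W → Fin q, if σ ∈ A ∧ σ ∈ C then B ^ mEdges G σ else 0) /
    ∑ σ : W → Fin q, if σ ∈ C then B ^ mEdges G σ else 0

/-!
Write `B ^ m(σ)` as the product over the edges `{i, i+1}` of the path of `w(σ i, σ (i+1))`, where
`w(a, b) = B` if `a = b` and `1` otherwise. If every vertex `i` is restricted to a colour set `A i`,
the restricted partition function is built by adding one vertex at a time, the new vertex
contributing the factor `∑ a ∈ A i, w(a, σ (i+1))`. For the colour pair `{c₁, c₂}` this factor is at
most `1 + B`, so a union bound over the `q²` pairs bounds the bichromatic weight by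
`2 q² (1 + B)^(ℓ-1)`. Conditioning on `τ` pins the colours on `Λ`: a pinned vertex contributes at
least `B` and a free one exactly `q - 1 + B`, so the normalisation is at least
`B^(|Λ|-1) (q - 1 + B)^(ℓ-|Λ|)`. The bound then follows from `B < 1`, `1 + B ≤ 2 ≤ q - 1 + B` and
`|Λ| ≥ 2`.
-/

open Finset

section PathTransfer

variable {α : Type*} (w : α → α → ℝ)

def pathWeight {n : ℕ} (σ : Fin (n + 1) → α) : ℝ :=
  ∏ i : Fin n, w (σ i.castSucc) (σ i.succ)

def pathPartition {n : ℕ} (A : Fin (n + 1) → Finset α) : ℝ :=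
  ∑ σ ∈ Fintype.piFinset A, pathWeight w σ

variable {w}

lemma pathWeight_cons {n : ℕ} (a : α) (σ : Fin (n + 1) → α) :
    pathWeight w (Fin.cons a σ : Fin (n + 2) → α) = w a (σ 0) * pathWeight w σ := by
  simp [pathWeight, Fin.prod_univ_succ]

lemma pathWeight_nonneg (hw : ∀ a b, 0 ≤ w a b) {n : ℕ} (σ : Fin (n + 1) → α) :
    0 ≤ pathWeight w σ :=
  prod_nonneg fun _ _ => hw _ _

lemma pathPartition_zero (A : Fin 1 → Finset α) : pathPartition w A = #(A 0) := by
  simp [pathPartition, pathWeight, Fintype.card_piFinset]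

lemma pathPartition_succ {n : ℕ} (A : Fin (n + 2) → Finset α) :
    pathPartition w A =
      ∑ σ ∈ Fintype.piFinset (Fin.tail A), (∑ a ∈ A 0, w a (σ 0)) * pathWeight w σ := by
  have := filter_piFinset_eq_map_consEquiv A (fun _ => True)
  simp only [filter_true] at this
  rw [pathPartition, this, sum_map, sum_product_right]
  simp [Fin.consEquiv, pathWeight_cons, sum_mul]

variable (hw : ∀ a b, 0 ≤ w a b)
include hw

lemma pathPartition_le {n : ℕ} (A : Fin (n + 1) → Finset α) (M : Fin n → ℝ) (hM : ∀ i, 0 ≤ M i)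
    (h : ∀ i : Fin n, ∀ b ∈ A i.succ, ∑ a ∈ A i.castSucc, w a b ≤ M i) :
    pathPartition w A ≤ (∏ i, M i) * #(A (Fin.last n)) := by
  induction n with
  | zero => simp [pathPartition_zero]
  | succ n ih =>
    have h_tail : ∀ i : Fin n, ∀ b ∈ Fin.tail A i.succ,
        ∑ a ∈ Fin.tail A i.castSucc, w a b ≤ M i.succ := fun i b hb => by
      simpa only [Fin.tail, Fin.succ_castSucc] using h i.succ b hb
    calc pathPartition w A
        ≤ ∑ σ ∈ Fintype.piFinset (Fin.tail A), M 0 * pathWeight w σ := by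
          rw [pathPartition_succ]
          refine sum_le_sum fun σ hσ => mul_le_mul_of_nonneg_right ?_ (pathWeight_nonneg hw σ)
          simpa using h 0 (σ 0) (Fintype.mem_piFinset.mp hσ 0)
      _ = M 0 * pathPartition w (Fin.tail A) := by rw [pathPartition, mul_sum]
      _ ≤ M 0 * ((∏ i : Fin n, M i.succ) * #(Fin.tail A (Fin.last n))) :=
          mul_le_mul_of_nonneg_left (ih _ _ (fun i => hM _) h_tail) (hM 0)
      _ = (∏ i, M i) * #(A (Fin.last (n + 1))) := by
          rw [Fin.prod_univ_succ, Fin.tail, Fin.succ_last, mul_assoc]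

lemma le_pathPartition {n : ℕ} (A : Fin (n + 1) → Finset α) (m : Fin n → ℝ) (hm : ∀ i, 0 ≤ m i)
    (h : ∀ i : Fin n, ∀ b ∈ A i.succ, m i ≤ ∑ a ∈ A i.castSucc, w a b) :
    (∏ i, m i) * #(A (Fin.last n)) ≤ pathPartition w A := by
  induction n with
  | zero => simp [pathPartition_zero]
  | succ n ih =>
    have h_tail : ∀ i : Fin n, ∀ b ∈ Fin.tail A i.succ,
        m i.succ ≤ ∑ a ∈ Fin.tail A i.castSucc, w a b := fun i b hb => by
      simpa only [Fin.tail, Fin.succ_castSucc] using h i.succ b hb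
    calc (∏ i, m i) * #(A (Fin.last (n + 1)))
        = m 0 * ((∏ i : Fin n, m i.succ) * #(Fin.tail A (Fin.last n))) := by
          rw [Fin.prod_univ_succ, Fin.tail, Fin.succ_last, mul_assoc]
      _ ≤ m 0 * pathPartition w (Fin.tail A) :=
          mul_le_mul_of_nonneg_left (ih _ _ (fun i => hm _) h_tail) (hm 0)
      _ = ∑ σ ∈ Fintype.piFinset (Fin.tail A), m 0 * pathWeight w σ := by
          rw [pathPartition, mul_sum]
      _ ≤ pathPartition w A := by
          rw [pathPartition_succ]
          refine sum_le_sum fun σ hσ => mul_le_mul_of_nonneg_right ?_ (pathWeight_nonneg hw σ)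
          simpa using h 0 (σ 0) (Fintype.mem_piFinset.mp hσ 0)

end PathTransfer

lemma sum_le_sum_bichromatic {W α : Type*} [Fintype W] [DecidableEq W] [Fintype α]
    [DecidableEq α] {s : Finset (W → α)} (hs : ∀ σ ∈ s, ∃ c₁ c₂, ∀ w, σ w = c₁ ∨ σ w = c₂)
    {f : (W → α) → ℝ} (hf : ∀ σ, 0 ≤ f σ) :
    ∑ σ ∈ s, f σ ≤ ∑ c₁, ∑ c₂, ∑ σ ∈ Fintype.piFinset (fun _ => {c₁, c₂}), f σ := by
  have hind : ∀ c₁ c₂ σ, 0 ≤ if σ ∈ Fintype.piFinset (fun _ : W => {c₁, c₂}) then f σ else 0 :=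
    fun _ _ σ => ite_nonneg (hf σ) le_rfl
  calc ∑ σ ∈ s, f σ
      ≤ ∑ σ ∈ s, ∑ c₁, ∑ c₂, if σ ∈ Fintype.piFinset (fun _ => {c₁, c₂}) then f σ else 0 := by
        refine sum_le_sum fun σ hσ => ?_
        obtain ⟨c₁, c₂, hc⟩ := hs σ hσ
        calc f σ = if σ ∈ Fintype.piFinset (fun _ => {c₁, c₂}) then f σ else 0 := by
              simp [Fintype.mem_piFinset, hc]
          _ ≤ ∑ c₂', if σ ∈ Fintype.piFinset (fun _ => {c₁, c₂'}) then f σ else 0 :=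
              single_le_sum (fun c _ => hind _ c σ) (mem_univ c₂)
          _ ≤ _ := single_le_sum (fun c _ => sum_nonneg fun c' _ => hind c c' σ) (mem_univ c₁)
    _ ≤ ∑ σ, ∑ c₁, ∑ c₂, if σ ∈ Fintype.piFinset (fun _ => {c₁, c₂}) then f σ else 0 :=
        sum_le_sum_of_subset_of_nonneg (subset_univ s) fun σ _ _ =>
          sum_nonneg fun c₁ _ => sum_nonneg fun c₂ _ => hind c₁ c₂ σ
    _ = _ := by
        rw [sum_comm]
        simp_rw [sum_comm (s := univ (α := W → α)), sum_ite_mem, univ_inter]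

noncomputable def pinnedColours {W α : Type*} [Fintype α] (Λ : Finset W) (τ : Λ → α) (j : W) :
    Finset α :=
  if h : j ∈ Λ then {τ ⟨j, h⟩} else univ

lemma mem_piFinset_pinnedColours {W α : Type*} [Fintype W] [DecidableEq W] [Fintype α]
    {Λ : Finset W} {τ : Λ → α} {σ : W → α} :
    σ ∈ Fintype.piFinset (pinnedColours Λ τ) ↔ ∀ x : Λ, σ x = τ x := by
  simp only [Fintype.mem_piFinset, Subtype.forall]
  refine forall_congr' fun j => ?_
  unfold pinnedColours
  split_ifs with h <;> simp [h]

lemma mEdges_pathGraph {q n : ℕ} (σ : Fin (n + 1) → Fin q) :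
    mEdges (SimpleGraph.pathGraph (n + 1)) σ = #{i : Fin n | σ i.castSucc = σ i.succ} := by
  rw [mEdges]
  symm
  refine card_nbij (fun i => s(i.castSucc, i.succ)) ?_ ?_ ?_
  · intro i hi
    simp_all [SimpleGraph.pathGraph_adj, eq_comm]
  · intro i _ j _ hij
    simp only [Sym2.eq_iff, Fin.ext_iff, Fin.val_castSucc, Fin.val_succ] at hij
    omega
  · intro e he
    induction e using Sym2.ind with
    | _ u v =>
    simp only [coe_filter, mem_univ, true_and, Set.mem_ofPred_eq, SimpleGraph.mem_edgeSet,
      SimpleGraph.pathGraph_adj, Sym2.mem_iff, forall_eq_or_imp, forall_eq, and_true] at he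
    obtain ⟨hadj | hadj, huv, hvu⟩ := he
    · refine ⟨⟨u, by omega⟩, ?_, ?_⟩ <;> simp [Fin.ext_iff, huv, hadj]
    · refine ⟨⟨v, by omega⟩, ?_, ?_⟩ <;> simp [Fin.ext_iff, hvu, hadj, Sym2.eq_swap]

def pottsWeight (B : ℝ) {q : ℕ} (a b : Fin q) : ℝ := if a = b then B else 1

section Potts

variable {q : ℕ} {B : ℝ}

lemma pottsWeight_nonneg (hB : 0 ≤ B) (a b : Fin q) : 0 ≤ pottsWeight B a b := by
  unfold pottsWeight; split_ifs <;> linarith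

lemma pow_mEdges_pathGraph {n : ℕ} (σ : Fin (n + 1) → Fin q) :
    B ^ mEdges (SimpleGraph.pathGraph (n + 1)) σ = pathWeight (pottsWeight B) σ := by
  rw [mEdges_pathGraph, pathWeight, ← prod_const, prod_filter]
  rfl

lemma sum_pottsWeight (b : Fin q) : ∑ a, pottsWeight B a b = q - 1 + B := by
  have hq : 1 ≤ q := Fin.pos b
  simp only [pottsWeight, sum_ite, filter_eq', filter_ne', mem_univ, ↓reduceIte, sum_const,
    card_singleton, card_erase_of_mem, card_univ, Fintype.card_fin, nsmul_eq_mul, Nat.cast_sub hq,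
    Nat.cast_one, one_smul, mul_one]
  ring

lemma sum_pottsWeight_pair_le {c₁ c₂ b : Fin q} (hb : b ∈ ({c₁, c₂} : Finset (Fin q))) :
    ∑ a ∈ {c₁, c₂}, pottsWeight B a b ≤ 1 + B := by
  rcases eq_or_ne c₁ c₂ with rfl | h
  · simp_all [pottsWeight]
  · rw [mem_insert, mem_singleton] at hb
    rcases hb with rfl | rfl <;> simp [pottsWeight, sum_pair h, h, h.symm, add_comm]

lemma pathPartition_pair_le (hB : 0 ≤ B) {n : ℕ} (c₁ c₂ : Fin q) :
    pathPartition (pottsWeight B) (fun _ : Fin (n + 1) => {c₁, c₂}) ≤ 2 * (1 + B) ^ n := by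
  calc _ ≤ (∏ _i : Fin n, (1 + B)) * #({c₁, c₂} : Finset (Fin q)) :=
        pathPartition_le (pottsWeight_nonneg hB) _ _ (fun _ => by positivity)
          fun _ _ hb => sum_pottsWeight_pair_le hb
    _ ≤ (1 + B) ^ n * 2 := by
        rw [prod_const, card_univ, Fintype.card_fin]
        gcongr
        exact_mod_cast card_le_two
    _ = _ := mul_comm _ _

lemma le_pathPartition_pinnedColours (hq : 1 ≤ q) (hB0 : 0 ≤ B) (hB1 : B ≤ 1) {n : ℕ}
    {Λ : Finset (Fin (n + 1))} (hΛ : Fin.last n ∈ Λ) (τ : Λ → Fin q) :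
    B ^ #Λ * (q - 1 + B) ^ (n + 1 - #Λ) ≤
      B * pathPartition (pottsWeight B) (pinnedColours Λ τ) := by
  set m : Fin (n + 1) → ℝ := fun j => if j ∈ Λ then B else q - 1 + B
  have hm : ∀ j, 0 ≤ m j := fun j => by
    have : (1 : ℝ) ≤ q := by exact_mod_cast hq
    unfold m; split_ifs <;> linarith
  have hprod : ∏ j, m j = B ^ #Λ * (q - 1 + B) ^ (n + 1 - #Λ) := by
    simp [m, prod_ite, filter_not, card_univ_sdiff]
  have hZ := le_pathPartition (pottsWeight_nonneg hB0) (pinnedColours Λ τ) (fun i => m i.castSucc)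
    (fun i => hm _) fun i b _ => by
      unfold m pinnedColours
      split_ifs with h
      · simp only [sum_singleton, pottsWeight]
        split_ifs <;> linarith
      · rw [sum_pottsWeight]
  rw [← hprod, Fin.prod_univ_castSucc]
  simpa [pinnedColours, hΛ, m, mul_comm] using mul_le_mul_of_nonneg_left hZ hB0

lemma pottsCond_pathGraph {n : ℕ} (A C : Set (Fin (n + 1) → Fin q)) :
    pottsCond (SimpleGraph.pathGraph (n + 1)) q B A C =
      (∑ σ with σ ∈ A ∧ σ ∈ C, pathWeight (pottsWeight B) σ) /
        ∑ σ with σ ∈ C, pathWeight (pottsWeight B) σ := by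
  simp only [pottsCond, pow_mEdges_pathGraph, sum_filter]
  -- `pottsCond` sums over `univ` built from the classical `DecidableEq` on the vertices
  congr <;> exact Subsingleton.elim _ _

lemma sum_bichromatic_pathWeight_le (hB : 0 ≤ B) {n : ℕ} {A : Set (Fin (n + 1) → Fin q)}
    (hA : ∀ σ ∈ A, ∃ c₁ c₂, ∀ w, σ w = c₁ ∨ σ w = c₂) (C : Set (Fin (n + 1) → Fin q)) :
    ∑ σ with σ ∈ A ∧ σ ∈ C, pathWeight (pottsWeight B) σ ≤ q ^ 2 * (2 * (1 + B) ^ n) := by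
  have hw := pottsWeight_nonneg (q := q) hB
  calc _ ≤ ∑ c₁, ∑ c₂, pathPartition (pottsWeight B) (fun _ : Fin (n + 1) => {c₁, c₂}) :=
        sum_le_sum_bichromatic (fun σ hσ => hA σ (mem_filter.mp hσ).2.1) (pathWeight_nonneg hw)
    _ ≤ ∑ _c₁ : Fin q, ∑ _c₂ : Fin q, 2 * (1 + B) ^ n := by
        gcongr with c₁ _ c₂ _
        exact pathPartition_pair_le hB c₁ c₂
    _ = q ^ 2 * (2 * (1 + B) ^ n) := by simp [sq, mul_assoc]

lemma pottsCond_pathGraph_le (hq : 1 ≤ q) (hB0 : 0 < B) (hB1 : B ≤ 1) {n : ℕ}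
    {Λ : Finset (Fin (n + 1))} (hΛ : Fin.last n ∈ Λ) (τ : Λ → Fin q)
    {A C : Set (Fin (n + 1) → Fin q)} (hA : ∀ σ ∈ A, ∃ c₁ c₂, ∀ w, σ w = c₁ ∨ σ w = c₂)
    (hC : ∀ σ, σ ∈ C ↔ ∀ x : Λ, σ x = τ x) :
    pottsCond (SimpleGraph.pathGraph (n + 1)) q B A C ≤
      q ^ 2 * (2 * (1 + B) ^ n) / (B ^ #Λ * (q - 1 + B) ^ (n + 1 - #Λ) / B) := by
  have hw := pottsWeight_nonneg (q := q) hB0.le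
  have hy : 0 < (q : ℝ) - 1 + B := by
    have : (1 : ℝ) ≤ q := by exact_mod_cast hq
    linarith
  have hden : ∑ σ with σ ∈ C, pathWeight (pottsWeight B) σ =
      pathPartition (pottsWeight B) (pinnedColours Λ τ) := by
    rw [pathPartition]
    congr 1
    ext σ
    rw [mem_filter, mem_piFinset_pinnedColours, hC]
    simp
  rw [pottsCond_pathGraph, hden]
  refine div_le_div₀ (by positivity) (sum_bichromatic_pathWeight_le hB0.le hA C) (by positivity) ?_
  refine div_le_of_le_mul₀ hB0.le (sum_nonneg fun σ _ => pathWeight_nonneg hw σ) ?_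
  rw [mul_comm _ B]
  exact le_pathPartition_pinnedColours hq hB0.le hB1 hΛ τ

end Potts

lemma potts_ratio_le {q k ℓ : ℕ} {B : ℝ} (hq : 3 ≤ q) (hB0 : 0 < B) (hB1 : B ≤ 1) (hk : 2 ≤ k)
    (hkℓ : k ≤ ℓ) :
    q ^ 2 * (2 * (1 + B) ^ (ℓ - 1)) / (B ^ k * (q - 1 + B) ^ (ℓ - k) / B) ≤
      (4 * q / B) ^ k * ((1 + B) / (B + q - 1)) ^ ((ℓ : ℤ) - 2 * k) := by
  have hq' : (3 : ℝ) ≤ q := by exact_mod_cast hq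
  set x := 1 + B
  set y := (q : ℝ) - 1 + B
  rw [show B + (q : ℝ) - 1 = y by ring]
  have hx0 : 0 < x := by positivity
  have hy0 : 0 < y := by linarith
  have hsplit :
      x ^ (ℓ - 1) * y ^ k = (x / y) ^ ((ℓ : ℤ) - 2 * k) * (x ^ (2 * k - 1) * y ^ (ℓ - k)) := by
    rw [div_zpow, ← zpow_natCast, ← zpow_natCast, ← zpow_natCast x, ← zpow_natCast y]
    push_cast [show 1 ≤ ℓ by omega, show 1 ≤ 2 * k by omega, hkℓ]
    field_simp
    rw [mul_assoc, ← zpow_add₀ hy0.ne', ← zpow_add₀ hx0.ne']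
    ring_nf
  have key : 2 * (q : ℝ) ^ 2 * B * x ^ (2 * k - 1) ≤ (4 * q) ^ k * y ^ k := by
    have h4 : (2 : ℝ) * 2 ^ (2 * k - 1) = 4 ^ k := by
      rw [← pow_succ', Nat.sub_add_cancel (by omega), pow_mul]
      norm_num
    calc 2 * q ^ 2 * B * x ^ (2 * k - 1) ≤ 2 * q ^ 2 * 1 * 2 ^ (2 * k - 1) := by
          gcongr; linarith
      _ = 4 ^ k * (q : ℝ) ^ 2 := by rw [← h4]; ring
      _ ≤ 4 ^ k * (q ^ k * y ^ k) := by
          gcongr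
          calc (q : ℝ) ^ 2 ≤ q ^ k := pow_le_pow_right₀ (by linarith) hk
            _ ≤ q ^ k * y ^ k := le_mul_of_one_le_right (by positivity) (one_le_pow₀ (by linarith))
      _ = (4 * q) ^ k * y ^ k := by ring
  rw [div_le_iff₀ (by positivity), ← mul_le_mul_iff_of_pos_right (by positivity : 0 < y ^ k * B)]
  calc q ^ 2 * (2 * x ^ (ℓ - 1)) * (y ^ k * B)
      = (2 * q ^ 2 * B * x ^ (2 * k - 1)) * ((x / y) ^ ((ℓ : ℤ) - 2 * k) * y ^ (ℓ - k)) := by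
        linear_combination (2 * q ^ 2 * B) * hsplit
    _ ≤ ((4 * q) ^ k * y ^ k) * ((x / y) ^ ((ℓ : ℤ) - 2 * k) * y ^ (ℓ - k)) := by gcongr
    _ = (4 * q / B) ^ k * (x / y) ^ ((ℓ : ℤ) - 2 * k) * (B ^ k * y ^ (ℓ - k) / B) *
          (y ^ k * B) := by
        rw [div_pow]
        field_simp

theorem stmt16 (q : ℕ) (hq : 3 ≤ q) (B : ℝ) (hB : B ∈ Set.Ioo (0 : ℝ) 1)
    (ℓ : ℕ) (hℓ : 2 ≤ ℓ) (Λ : Finset (Fin ℓ))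
    (h0 : (⟨0, by omega⟩ : Fin ℓ) ∈ Λ) (h1 : (⟨ℓ - 1, by omega⟩ : Fin ℓ) ∈ Λ)
    (τ : ↥Λ → Fin q) :
    pottsCond (SimpleGraph.pathGraph ℓ) q B
        {σ | ∃ c₁ c₂ : Fin q, ∀ w : Fin ℓ, σ w = c₁ ∨ σ w = c₂}
        {σ | ∀ x : ↥Λ, σ x = τ x} ≤
      (4 * q / B) ^ Λ.card *
        ((1 + B) / (B + (q : ℝ) - 1)) ^ ((ℓ : ℤ) - 2 * (Λ.card : ℤ)) := by
  obtain ⟨hB0, hB1⟩ := hB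
  obtain ⟨n, rfl⟩ : ∃ n, ℓ = n + 1 := ⟨ℓ - 1, by omega⟩
  have hlast : Fin.last n ∈ Λ := by simpa [Fin.last] using h1
  have hk : 2 ≤ #Λ := one_lt_card.2 ⟨_, h0, _, hlast, by simp [Fin.ext_iff]; omega⟩
  have hkℓ : #Λ ≤ n + 1 := (card_le_univ Λ).trans_eq (Fintype.card_fin _)
  calc _ ≤ q ^ 2 * (2 * (1 + B) ^ (n + 1 - 1)) / (B ^ #Λ * (q - 1 + B) ^ (n + 1 - #Λ) / B) :=
        pottsCond_pathGraph_le (by omega) hB0 hB1.le hlast τ (fun _ h => h) fun _ => Iff.rfl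
    _ ≤ _ := potts_ratio_le hq hB0 hB1.le hk hkℓ
end

section
/- Let B ∈ (0,1), let q ≥ 3 be an integer, and let ε ∈ (0,1). Let G = (V,E) be a finite graph, μ_G the q-state Potts distribution on G with parameter B, and u, v vertices with {u,v} ∉ E such that E[Corr_G(U_σ, u, v)] ≤ ε, where the expectation is over σ ∼ μ_G and over the random bichromatic class U_σ containing u and v. Let G' = (V, E ∪ {{u,v}}). Sample σ' : V → [q] as follows: sample σ ∼ μ_G; if σ_u ≠ σ_v set σ' = σ; otherwise, with probability qB/(B+q−1) set σ' = σ, and with the remaining probability pick a uniformly random colour c' from [q]∖{c} where c = σ_u = σ_v, set U = σ^{−1}(c,c'), sample τ : U → {c,c'} from the Ising distribution with parameter B on G[U] with state set {c,c'} conditioned on τ_u = c and τ_v = c', and set σ'_w = τ_w for w ∈ U and σ'_w = σ_w for w ∉ U. Then the distribution ν_{σ'} of σ' satisfies ‖ν_{σ'} − μ_{G'}‖_TV ≤ 2ε/B, where μ_{G'} is the q-state Potts distribution on G' with parameter B. -/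
open scoped Classical

/-- Potts partition function of `G` with `q` states and parameter `B`. -/
noncomputable def pottsZ {W : Type} [Fintype W] (G : SimpleGraph W) (q : ℕ) (B : ℝ) : ℝ :=
  ∑ σ : W → Fin q, B ^ mEdges G σ

/-- Potts probability of the configuration `σ`. -/
noncomputable def pottsP {W : Type} [Fintype W] (G : SimpleGraph W) (q : ℕ) (B : ℝ)
    (σ : W → Fin q) : ℝ :=
  B ^ mEdges G σ / pottsZ G q B

/-- The `(c,c')`-colour-class of `σ`: vertices coloured `c` or `c'`. -/
def classOf {V : Type} {q : ℕ} (σ : V → Fin q) (c c' : Fin q) : Set V :=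
  {x | σ x = c ∨ σ x = c'}

/-- The correlation `Corr_G(U,u,v)` between `u` and `v` in the Ising distribution with
parameter `B` on the induced subgraph `G[U]`:
`|π(η_u = 1, η_v = 1) / π(η_u = 1, η_v = 2) - 1|`. -/
noncomputable def isingCorr {V : Type} [Fintype V] (G : SimpleGraph V) (B : ℝ)
    (U : Set V) (u v : V) : ℝ :=
  |(∑ f : ↥U → Fin 2,
        if (∀ x : ↥U, (x : V) = u → f x = 0) ∧ (∀ x : ↥U, (x : V) = v → f x = 0)
        then B ^ mEdges (G.induce U) f else 0) /
      (∑ f : ↥U → Fin 2,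
        if (∀ x : ↥U, (x : V) = u → f x = 0) ∧ (∀ x : ↥U, (x : V) = v → f x = 1)
        then B ^ mEdges (G.induce U) f else 0) - 1|

/-- The expectation `E[Corr_G(U_σ,u,v)]` over `σ ∼ μ_G` and over the uniformly random
bichromatic class `U_σ` containing `u` and `v`. -/
noncomputable def expCorr {V : Type} [Fintype V] (G : SimpleGraph V) (q : ℕ) (B : ℝ)
    (u v : V) : ℝ :=
  ∑ σ : V → Fin q, pottsP G q B σ *
    (if σ u = σ v then
        ((q : ℝ) - 1)⁻¹ *
          ∑ c' ∈ Finset.univ.erase (σ u), isingCorr G B (classOf σ (σ u) c') u v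
      else isingCorr G B (classOf σ (σ u) (σ v)) u v)

/-- The Ising distribution with parameter `B` and state set `{c,c'}` on `G[U]`,
conditioned on `u` taking state `c` and `v` taking state `c'`, evaluated at `ξ`. -/
noncomputable def isingCondP {V : Type} [Fintype V] (G : SimpleGraph V) (B : ℝ) {q : ℕ}
    (U : Set V) (u v : V) (c c' : Fin q) (ξ : ↥U → Fin q) : ℝ :=
  B ^ mEdges (G.induce U) ξ /
    ∑ ξ' ∈ Finset.univ.filter (fun ξ' : ↥U → Fin q =>
        (∀ x, ξ' x = c ∨ ξ' x = c') ∧ (∀ x : ↥U, (x : V) = u → ξ' x = c) ∧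
          (∀ x : ↥U, (x : V) = v → ξ' x = c')),
      B ^ mEdges (G.induce U) ξ'

/-- The transition kernel of the (ideal) resampling step when the edge `{u,v}` is added:
if `σ_u ≠ σ_v` keep `σ`; otherwise keep `σ` with probability `qB/(B+q-1)` and with the
remaining probability pick a uniformly random second colour `c' ≠ c = σ_u = σ_v` and
resample the `(c,c')`-colour-class from the Ising distribution on it conditioned on
`u ↦ c`, `v ↦ c'`.  `resampleKernel G q B u v σ η` is the probability that the resulting
configuration is `η`. -/
noncomputable def resampleKernel {V : Type} [Fintype V] (G : SimpleGraph V) (q : ℕ) (B : ℝ)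
    (u v : V) (σ η : V → Fin q) : ℝ :=
  if σ u ≠ σ v then (if η = σ then 1 else 0)
  else
    ((q : ℝ) * B / (B + (q : ℝ) - 1)) * (if η = σ then 1 else 0) +
      ∑ c' ∈ Finset.univ.erase (σ u),
        ((1 - B) / (B + (q : ℝ) - 1)) *
          (if (∀ x, x ∉ classOf σ (σ u) c' → η x = σ x) ∧
              (∀ x ∈ classOf σ (σ u) c', η x = σ u ∨ η x = c') ∧
              η u = σ u ∧ η v = c'
            then isingCondP G B (classOf σ (σ u) c') u v (σ u) c'
                (fun x => η (x : V))
            else 0)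

/-- The distribution `ν_{σ'}` of the output of the resampling step, started from `σ ∼ μ_G`. -/
noncomputable def resampleDist {V : Type} [Fintype V] (G : SimpleGraph V) (q : ℕ) (B : ℝ)
    (u v : V) (η : V → Fin q) : ℝ :=
  ∑ σ : V → Fin q, pottsP G q B σ * resampleKernel G q B u v σ η

/-!
Write `μ = μ_G`, `D = B + q - 1` and `w η = B` if `η u = η v`, `w η = 1` otherwise, so that
`μ_{G'}` is proportional to `μ w`. A configuration `η` with `η u = η v` is only produced by keeping
it, so `ν η = (q / D) μ η w η`. If `η u ≠ η v`, then besides by keeping, `η` is produced by a move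
exactly from the `σ` that agree with `η` off `U = η⁻¹(η u, η v)`, take the colours `η u, η v` on `U`
and have `σ u = σ v = η u`. The Potts weight of such a `σ` is the weight of the edges outside `U`
times an Ising weight on `G[U]`, so these `σ` contribute `(1 - B) / D · μ η · R`, where
`R = Z_U(u ↦ c, v ↦ c) / Z_U(u ↦ c, v ↦ c')` is the Ising ratio with `|R - 1| = Corr_G(U, u, v)`.
Hence `ν = (q / D) μ w + δ` with `δ η = (1 - B) / D · μ η · (R - 1)`. Since `ν` has total mass one,
the normalisations of `(q / D) μ w` and of `μ_{G'}` differ by `Σ δ`, so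
`‖ν - μ_{G'}‖_TV ≤ Σ |δ| ≤ (1 - B) / D · E[Corr] ≤ ε`.
-/

open Finset

lemma sum_abs_sub_div_sum_le {ι : Type*} [Fintype ι] {ν p δ : ι → ℝ} (κ : ℝ)
    (hp : ∀ i, 0 ≤ p i) (hS : 0 < ∑ i, p i) (hν : ∀ i, ν i = κ * p i + δ i)
    (hν1 : ∑ i, ν i = 1) :
    ∑ i, |ν i - p i / ∑ j, p j| ≤ 2 * ∑ i, |δ i| := by
  set S := ∑ i, p i
  have hsum : κ * S - 1 = -∑ i, δ i := by
    rw [← hν1, sum_congr rfl fun i _ => hν i, sum_add_distrib, mul_sum]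
    ring
  have hpt (i : ι) : |ν i - p i / S| ≤ p i * |κ - 1 / S| + |δ i| :=
    calc |ν i - p i / S| = |p i * (κ - 1 / S) + δ i| := by rw [hν i]; ring_nf
      _ ≤ |p i * (κ - 1 / S)| + |δ i| := abs_add_le _ _
      _ = p i * |κ - 1 / S| + |δ i| := by rw [abs_mul, abs_of_nonneg (hp i)]
  calc ∑ i, |ν i - p i / S| ≤ ∑ i, (p i * |κ - 1 / S| + |δ i|) := sum_le_sum fun i _ => hpt i
    _ = |κ * S - 1| + ∑ i, |δ i| := by
      rw [sum_add_distrib, ← sum_mul, show κ * S - 1 = S * (κ - 1 / S) by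
        rw [mul_sub, mul_one_div_cancel hS.ne', mul_comm], abs_mul, abs_of_pos hS]
    _ ≤ 2 * ∑ i, |δ i| := by
      rw [hsum, abs_neg]
      linarith [abs_sum_le_sum_abs δ univ]

section

variable {V : Type} {q : ℕ}

lemma forall_mem_sym2_iff {α β : Type*} (f : α → β) (a b : α) :
    (∀ x ∈ s(a, b), ∀ y ∈ s(a, b), f x = f y) ↔ f a = f b := by
  simp only [Sym2.forall_mem_pair, true_and, and_true]
  exact ⟨fun h => h.1, fun h => ⟨h, h.symm⟩⟩

lemma edgeSet_sup_edge (G : SimpleGraph V) {u v : V} (huv : u ≠ v) :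
    (G ⊔ SimpleGraph.fromEdgeSet {s(u, v)}).edgeSet = insert s(u, v) G.edgeSet := by
  rw [SimpleGraph.edgeSet_sup, ← SimpleGraph.edge, SimpleGraph.edgeSet_edge_of_ne huv,
    Set.union_singleton]

def IsPinned (U : Set V) (u v : V) (c c' a b : Fin q) (ξ : U → Fin q) : Prop :=
  (∀ x, ξ x = c ∨ ξ x = c') ∧ (∀ x : U, (x : V) = u → ξ x = a) ∧
    ∀ x : U, (x : V) = v → ξ x = b

def IsRecolouring (σ η : V → Fin q) (c c' : Fin q) : Prop :=
  (∀ x, x ∉ classOf σ c c' → η x = σ x) ∧ ∀ x ∈ classOf σ c c', η x = c ∨ η x = c'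

namespace IsRecolouring

variable {σ η : V → Fin q} {c c' : Fin q}

lemma classOf_eq (h : IsRecolouring σ η c c') : classOf η c c' = classOf σ c c' := by
  ext x
  by_cases hx : x ∈ classOf σ c c'
  · exact iff_of_true (h.2 x hx) hx
  · refine iff_of_false (fun hη => hx ?_) hx
    show σ x = c ∨ σ x = c'
    rwa [← h.1 x hx]

lemma symm (h : IsRecolouring σ η c c') : IsRecolouring η σ c c' := by
  rw [IsRecolouring, h.classOf_eq]
  exact ⟨fun x hx => (h.1 x hx).symm, fun x hx => hx⟩

end IsRecolouring

lemma isRecolouring_and_iff {τ σ : V → Fin q} {c c' a b : Fin q} {u v : V}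
    (hu : u ∈ classOf τ c c') (hv : v ∈ classOf τ c c') :
    IsRecolouring τ σ c c' ∧ σ u = a ∧ σ v = b ↔
      (∀ x ∉ classOf τ c c', σ x = τ x) ∧
        IsPinned (classOf τ c c') u v c c' a b ((classOf τ c c').domRestrict σ) := by
  have hpin {w : V} (hw : w ∈ classOf τ c c') {d : Fin q} :
      (∀ x : classOf τ c c', (x : V) = w → σ x = d) ↔ σ w = d :=
    ⟨fun h => h ⟨w, hw⟩ rfl, fun h x hx => hx ▸ h⟩
  simp only [IsRecolouring, IsPinned, Set.domRestrict_apply, hpin hu, hpin hv]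
  simp only [Subtype.forall]
  tauto

noncomputable def moveProb (q : ℕ) (B : ℝ) : ℝ := (1 - B) / (B + q - 1)

lemma moveProb_nonneg {B : ℝ} (hB : 0 < B) (hB1 : B ≤ 1) (hq : 0 < q) : 0 ≤ moveProb q B := by
  have : (1 : ℝ) ≤ q := by exact_mod_cast hq
  exact div_nonneg (by linarith) (by linarith)

end

section

variable {V : Type} [Fintype V] {q : ℕ}

lemma sum_filter_agreeOff_domRestrict {α : Type} [Fintype α] [DecidableEq α] (σ : V → α)
    (U : Set V) (F : (U → α) → ℝ) :
    ∑ η : V → α with ∀ x ∉ U, η x = σ x, F (U.domRestrict η) = ∑ ξ : U → α, F ξ := by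
  have hext (ξ : U → α) {x : V} (hx : x ∉ U) : Function.extend Subtype.val ξ σ x = σ x :=
    Function.extend_apply' _ _ _ fun ⟨a, ha⟩ => hx (ha ▸ a.2)
  refine sum_nbij' U.domRestrict (fun ξ => Function.extend Subtype.val ξ σ)
    (fun _ _ => mem_coe.2 (mem_univ _))
    (fun ξ _ => by simpa using fun x hx => hext ξ hx) (fun η hη => ?_)
    (fun ξ _ => funext (Subtype.val_injective.extend_apply _ _)) (fun _ _ => rfl)
  replace hη : ∀ x ∉ U, η x = σ x := by simpa using hη
  funext x
  by_cases hx : x ∈ U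
  · exact Subtype.val_injective.extend_apply _ _ ⟨x, hx⟩
  · rw [hext _ hx, hη x hx]

lemma mEdges_comp_of_injective {W : Type} [Fintype W] (H : SimpleGraph W) {r : ℕ}
    {f : Fin q → Fin r} (hf : Function.Injective f) (ξ : W → Fin q) :
    mEdges H (f ∘ ξ) = mEdges H ξ := by
  simp only [mEdges, Function.comp_apply, hf.eq_iff]

lemma mEdges_induce (G : SimpleGraph V) (U : Set V) [Fintype U] (η : V → Fin q) :
    mEdges (G.induce U) (U.domRestrict η) =
      #{e : Sym2 V | e ∈ G.edgeSet ∧ (∀ x ∈ e, x ∈ U) ∧ ∀ x ∈ e, ∀ y ∈ e, η x = η y} := by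
  refine card_nbij (Sym2.map Subtype.val) ?_ (Sym2.map.injective Subtype.val_injective).injOn ?_
  · intro e
    induction e using Sym2.ind with
    | _ a b =>
      simp only [coe_filter, mem_univ, true_and, Set.mem_ofPred_eq, Sym2.map_mk,
        SimpleGraph.mem_edgeSet, SimpleGraph.comap_adj]
      rw [forall_mem_sym2_iff, forall_mem_sym2_iff, Sym2.forall_mem_pair]
      exact fun h => ⟨h.1, ⟨a.2, b.2⟩, h.2⟩
  · intro e he
    simp only [coe_filter, mem_univ, true_and, Set.mem_ofPred_eq] at he
    refine ⟨e.attachWith he.2.1, ?_, Sym2.attachWith_map_subtypeVal he.2.1⟩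
    induction e using Sym2.ind with
    | _ a b =>
      simp only [coe_filter, mem_univ, true_and, Set.mem_ofPred_eq, Sym2.attachWith,
        Sym2.pmap_pair, SimpleGraph.mem_edgeSet, SimpleGraph.comap_adj]
      exact ⟨he.1, (forall_mem_sym2_iff (U.domRestrict η) _ _).2
        ((forall_mem_sym2_iff η a b).1 he.2.2)⟩

lemma mEdges_eq_induce_add_induce_compl (G : SimpleGraph V) (U : Set V) (η : V → Fin q)
    (h : ∀ x ∈ U, ∀ y ∉ U, η x ≠ η y) :
    mEdges G η =
      mEdges (G.induce U) (U.domRestrict η) + mEdges (G.induce Uᶜ) (Uᶜ.domRestrict η) := by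
  simp only [mEdges_induce]
  rw [mEdges, ← card_filter_add_card_filter_not (p := fun e : Sym2 V => ∀ x ∈ e, x ∈ U)]
  congr 2 <;> ext e <;> simp only [mem_filter, mem_univ, true_and]
  · tauto
  · refine ⟨fun ⟨⟨he, hmono⟩, hU⟩ => ⟨he, fun x hx hxU => ?_, hmono⟩,
      fun ⟨he, hUc, hmono⟩ => ⟨⟨he, hmono⟩, fun hU => ?_⟩⟩
    · obtain ⟨y, hy, hyU⟩ := not_forall₂.1 hU
      exact h x hxU y hyU (hmono x hx y hy)
    · induction e using Sym2.ind with
      | _ a b => exact hUc a (Sym2.mem_mk_left a b) (hU a (Sym2.mem_mk_left a b))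

lemma mEdges_sup_edge (G : SimpleGraph V) {u v : V} (huv : u ≠ v) (hadj : ¬ G.Adj u v)
    (η : V → Fin q) :
    mEdges (G ⊔ SimpleGraph.fromEdgeSet {s(u, v)}) η =
      mEdges G η + if η u = η v then 1 else 0 := by
  simp only [mEdges, edgeSet_sup_edge G huv, Set.mem_insert_iff, or_and_right, filter_or]
  rw [card_union_of_disjoint, add_comm]
  · congr 1
    rw [filter_and, filter_eq', if_pos (mem_univ _)]
    split_ifs with h <;> simp [h]
  · refine disjoint_filter.2 fun e _ he huv => hadj ?_
    rw [← SimpleGraph.mem_edgeSet, ← he.1]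
    exact huv.1

lemma pottsZ_pos (G : SimpleGraph V) (hq : 0 < q) {B : ℝ} (hB : 0 < B) : 0 < pottsZ G q B :=
  sum_pos (fun _ _ => pow_pos hB _) ⟨fun _ => ⟨0, hq⟩, mem_univ _⟩

lemma pottsP_pos (G : SimpleGraph V) (hq : 0 < q) {B : ℝ} (hB : 0 < B) (σ : V → Fin q) :
    0 < pottsP G q B σ :=
  div_pos (pow_pos hB _) (pottsZ_pos G hq hB)

lemma sum_pottsP (G : SimpleGraph V) (hq : 0 < q) {B : ℝ} (hB : 0 < B) :
    ∑ σ : V → Fin q, pottsP G q B σ = 1 := by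
  simp only [pottsP, ← sum_div]
  exact div_self (pottsZ_pos G hq hB).ne'

lemma pottsP_sup_edge (G : SimpleGraph V) (hq : 0 < q) {B : ℝ} (hB : 0 < B) {u v : V}
    (huv : u ≠ v) (hadj : ¬ G.Adj u v) (η : V → Fin q) :
    pottsP (G ⊔ SimpleGraph.fromEdgeSet {s(u, v)}) q B η =
      pottsP G q B η * (if η u = η v then B else 1) /
        ∑ η' : V → Fin q, pottsP G q B η' * (if η' u = η' v then B else 1) := by
  have hpow (η : V → Fin q) : B ^ mEdges (G ⊔ SimpleGraph.fromEdgeSet {s(u, v)}) η =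
      B ^ mEdges G η * if η u = η v then B else 1 := by
    rw [mEdges_sup_edge G huv hadj, pow_add]
    split_ifs <;> simp
  simp only [pottsP, div_mul_eq_mul_div, ← sum_div]
  rw [div_div_div_cancel_right₀ (pottsZ_pos G hq hB).ne', pottsZ]
  simp only [hpow]

noncomputable def pinnedZ (G : SimpleGraph V) (B : ℝ) (U : Set V) (u v : V)
    (c c' a b : Fin q) : ℝ :=
  ∑ ξ : U → Fin q with IsPinned U u v c c' a b ξ, B ^ mEdges (G.induce U) ξ

lemma isingCondP_eq (G : SimpleGraph V) (B : ℝ) (U : Set V) (u v : V) (c c' : Fin q)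
    (ξ : U → Fin q) :
    isingCondP G B U u v c c' ξ = B ^ mEdges (G.induce U) ξ / pinnedZ G B U u v c c' c c' := by
  unfold isingCondP pinnedZ IsPinned
  congr

lemma pinnedZ_pos (G : SimpleGraph V) {B : ℝ} (hB : 0 < B) (U : Set V) {u v : V} (huv : u ≠ v)
    (c c' : Fin q) : 0 < pinnedZ G B U u v c c' c c' := by
  refine sum_pos (fun _ _ => pow_pos hB _)
    ⟨fun x => if (x : V) = u then c else c', mem_filter.2 ⟨mem_univ _, ?_⟩⟩
  refine ⟨fun x => ?_, fun x hx => if_pos hx, fun x hx => if_neg (hx ▸ huv.symm)⟩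
  dsimp only
  split_ifs
  exacts [Or.inl rfl, Or.inr rfl]

lemma pinnedZ_comp_of_injective (G : SimpleGraph V) (B : ℝ) (U : Set V) (u v : V) {r : ℕ}
    {f : Fin q → Fin r} (hf : Function.Injective f) (c c' a b : Fin q) :
    pinnedZ G B U u v (f c) (f c') (f a) (f b) = pinnedZ G B U u v c c' a b := by
  set g : Fin r → Fin q := fun y => if y = f c then c else c'
  have hgf {y : Fin q} (hy : y = c ∨ y = c') : g (f y) = y := by
    rcases hy with rfl | rfl <;> simp [g, hf.eq_iff, eq_comm]
  have hfg {y : Fin r} (hy : y = f c ∨ y = f c') : f (g y) = y := by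
    rcases hy with rfl | rfl <;> simp only [g] <;> split_ifs <;> simp_all
  symm
  refine sum_nbij' (f ∘ ·) (g ∘ ·) (fun ξ hξ => ?_) (fun ξ hξ => ?_) (fun ξ hξ => ?_)
    (fun ξ hξ => ?_) (fun ξ _ => congrArg _ (mEdges_comp_of_injective _ hf ξ).symm)
  all_goals rw [mem_filter_univ] at hξ; obtain ⟨hval, hu, hv⟩ := hξ
  · rw [mem_filter_univ]
    exact ⟨fun x => (hval x).imp (congrArg f) (congrArg f), fun x hx => congrArg f (hu x hx),
      fun x hx => congrArg f (hv x hx)⟩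
  · rw [mem_filter_univ]
    refine ⟨fun x => ?_, fun x hx => ?_, fun x hx => ?_⟩
    · simp only [Function.comp_apply, g]
      split_ifs <;> simp
    · rw [Function.comp_apply, hu x hx]
      exact hgf ((hu x hx ▸ hval x).imp (fun h => hf h) (fun h => hf h))
    · rw [Function.comp_apply, hv x hx]
      exact hgf ((hv x hx ▸ hval x).imp (fun h => hf h) (fun h => hf h))
  · exact funext fun x => hgf (hval x)
  · exact funext fun x => hfg (hval x)

noncomputable def pinnedRatio (G : SimpleGraph V) (B : ℝ) (U : Set V) (u v : V)
    (c c' : Fin q) : ℝ :=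
  pinnedZ G B U u v c c' c c / pinnedZ G B U u v c c' c c'

lemma sum_ite_eq_pinnedZ_fin_two (G : SimpleGraph V) (B : ℝ) (U : Set V) (u v : V)
    (a b : Fin 2) :
    (∑ f : U → Fin 2, if (∀ x : U, (x : V) = u → f x = a) ∧ (∀ x : U, (x : V) = v → f x = b)
      then B ^ mEdges (G.induce U) f else 0) = pinnedZ G B U u v 0 1 a b := by
  have hval (f : U → Fin 2) (x : U) : f x = 0 ∨ f x = 1 := by
    generalize f x = i
    fin_cases i <;> simp
  rw [pinnedZ, sum_filter]
  simp only [IsPinned, hval, implies_true, true_and]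

lemma isingCorr_eq_abs_pinnedRatio_sub_one (G : SimpleGraph V) (B : ℝ) (U : Set V) (u v : V)
    {c c' : Fin q} (hcc : c ≠ c') :
    isingCorr G B U u v = |pinnedRatio G B U u v c c' - 1| := by
  have hf : Function.Injective ![c, c'] := by
    intro i j h
    fin_cases i <;> fin_cases j <;> simp_all [eq_comm]
  have h00 := pinnedZ_comp_of_injective G B U u v hf 0 1 0 0
  have h01 := pinnedZ_comp_of_injective G B U u v hf 0 1 0 1
  simp only [Matrix.cons_val_zero, Matrix.cons_val_one] at h00 h01
  rw [isingCorr, sum_ite_eq_pinnedZ_fin_two, sum_ite_eq_pinnedZ_fin_two, pinnedRatio, h00, h01]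

lemma sum_filter_isRecolouring (τ : V → Fin q) {c c' a b : Fin q} {u v : V}
    (hu : u ∈ classOf τ c c') (hv : v ∈ classOf τ c c') (g : (classOf τ c c' → Fin q) → ℝ) :
    ∑ σ with IsRecolouring τ σ c c' ∧ σ u = a ∧ σ v = b, g ((classOf τ c c').domRestrict σ) =
      ∑ ξ with IsPinned (classOf τ c c') u v c c' a b ξ, g ξ := by
  rw [filter_congr (fun σ _ => isRecolouring_and_iff hu hv), sum_filter]
  simp only [ite_and]
  rw [← sum_filter, sum_filter_agreeOff_domRestrict τ _
    (fun ξ => if IsPinned (classOf τ c c') u v c c' a b ξ then g ξ else 0), sum_filter]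

lemma sum_isingCondP_isRecolouring (G : SimpleGraph V) {B : ℝ} (hB : 0 < B) {u v : V}
    (huv : u ≠ v) (σ : V → Fin q) {c c' : Fin q} (hu : u ∈ classOf σ c c')
    (hv : v ∈ classOf σ c c') :
    ∑ η with IsRecolouring σ η c c' ∧ η u = c ∧ η v = c',
      isingCondP G B (classOf σ c c') u v c c' ((classOf σ c c').domRestrict η) = 1 := by
  rw [sum_filter_isRecolouring σ hu hv (isingCondP G B _ u v c c')]
  simp only [isingCondP_eq, ← sum_div]
  exact div_self (pinnedZ_pos G hB _ huv c c').ne'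

lemma sum_pow_mEdges_isRecolouring (G : SimpleGraph V) (B : ℝ) (τ : V → Fin q)
    {c c' a b : Fin q} {u v : V} (hu : u ∈ classOf τ c c') (hv : v ∈ classOf τ c c') :
    ∑ σ with IsRecolouring τ σ c c' ∧ σ u = a ∧ σ v = b, B ^ mEdges G σ =
      B ^ mEdges (G.induce (classOf τ c c')ᶜ) ((classOf τ c c')ᶜ.domRestrict τ) *
        pinnedZ G B (classOf τ c c') u v c c' a b := by
  set U := classOf τ c c'
  have hsplit {σ : V → Fin q} (hσ : IsRecolouring τ σ c c') :
      B ^ mEdges G σ = B ^ mEdges (G.induce Uᶜ) (Uᶜ.domRestrict τ) *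
        B ^ mEdges (G.induce U) (U.domRestrict σ) := by
    obtain ⟨hout, hin⟩ := hσ
    have hcross : ∀ x ∈ U, ∀ y ∉ U, σ x ≠ σ y := fun x hx y hy hxy =>
      hy (by show τ y = c ∨ τ y = c'; rw [← hout y hy, ← hxy]; exact hin x hx)
    have hcompl : Uᶜ.domRestrict σ = Uᶜ.domRestrict τ := funext fun x => hout x x.2
    rw [mEdges_eq_induce_add_induce_compl G U σ hcross, hcompl, pow_add, mul_comm]
  rw [sum_congr rfl fun σ hσ => hsplit ((mem_filter_univ σ).1 hσ).1, pinnedZ, mul_sum]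
  exact sum_filter_isRecolouring τ hu hv (fun ξ => _ * B ^ mEdges (G.induce U) ξ)

noncomputable def moveKernel (G : SimpleGraph V) (q : ℕ) (B : ℝ) (u v : V)
    (σ η : V → Fin q) : ℝ :=
  ∑ c' ∈ univ.erase (σ u), moveProb q B *
    if IsRecolouring σ η (σ u) c' ∧ η u = σ u ∧ η v = c' then
      isingCondP G B (classOf σ (σ u) c') u v (σ u) c' ((classOf σ (σ u) c').domRestrict η)
    else 0

lemma resampleKernel_eq (G : SimpleGraph V) (B : ℝ) (u v : V) (σ η : V → Fin q) :
    resampleKernel G q B u v σ η =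
      (if η = σ then (if σ u = σ v then q * B / (B + q - 1) else 1) else 0) +
        if σ u = σ v then moveKernel G q B u v σ η else 0 := by
  by_cases h : σ u = σ v
  · rw [resampleKernel, if_neg (not_not.2 h), if_pos h, if_pos h, mul_ite, mul_one, mul_zero]
    congr 1
    simp only [moveKernel, moveProb, IsRecolouring, and_assoc]
    rfl
  · rw [resampleKernel, if_pos h, if_neg h, if_neg h, add_zero]

lemma sum_moveKernel (G : SimpleGraph V) {B : ℝ} (hB : 0 < B) {u v : V} (huv : u ≠ v)
    {σ : V → Fin q} (hσ : σ u = σ v) :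
    ∑ η, moveKernel G q B u v σ η = (q - 1) * moveProb q B := by
  have hone (c' : Fin q) : ∑ η, (if IsRecolouring σ η (σ u) c' ∧ η u = σ u ∧ η v = c' then
      isingCondP G B (classOf σ (σ u) c') u v (σ u) c' ((classOf σ (σ u) c').domRestrict η)
      else 0) = 1 := by
    rw [← sum_filter]
    exact sum_isingCondP_isRecolouring G hB huv σ (Or.inl rfl) (Or.inl hσ.symm)
  simp only [moveKernel]
  rw [sum_comm]
  simp only [← mul_sum, hone, mul_one, sum_const, card_erase_of_mem (mem_univ _), card_univ,
    Fintype.card_fin, nsmul_eq_mul, Nat.cast_pred (σ u).pos]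

lemma sum_resampleKernel (G : SimpleGraph V) {B : ℝ} (hB : 0 < B) {u v : V} (huv : u ≠ v)
    (σ : V → Fin q) : ∑ η, resampleKernel G q B u v σ η = 1 := by
  have hD : (B + q - 1 : ℝ) ≠ 0 := by
    have : (1 : ℝ) ≤ q := by exact_mod_cast (σ u).pos
    linarith
  simp only [resampleKernel_eq, sum_add_distrib, sum_ite_eq', mem_univ, if_true]
  split_ifs with hσ
  · rw [sum_moveKernel G hB huv hσ, moveProb]
    field_simp
    ring
  · simp

lemma sum_resampleDist (G : SimpleGraph V) (hq : 0 < q) {B : ℝ} (hB : 0 < B) {u v : V}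
    (huv : u ≠ v) : ∑ η, resampleDist G q B u v η = 1 := by
  simp only [resampleDist]
  rw [sum_comm]
  simp only [← mul_sum, sum_resampleKernel G hB huv, mul_one, sum_pottsP G hq hB]

lemma moveKernel_eq_zero (G : SimpleGraph V) (B : ℝ) {u v : V} (σ : V → Fin q)
    {η : V → Fin q} (hη : η u = η v) : moveKernel G q B u v σ η = 0 :=
  sum_eq_zero fun c' hc' => by
    rw [if_neg, mul_zero]
    rintro ⟨-, hu, hv⟩
    exact (mem_erase.1 hc').1 (hv.symm.trans (hη.symm.trans hu))

lemma ite_moveKernel_eq (G : SimpleGraph V) (B : ℝ) {u v : V} {η : V → Fin q}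
    (hne : η u ≠ η v) (σ : V → Fin q) :
    (if σ u = σ v then moveKernel G q B u v σ η else 0) =
      if IsRecolouring η σ (η u) (η v) ∧ σ u = η u ∧ σ v = η u then
        moveProb q B * isingCondP G B (classOf η (η u) (η v)) u v (η u) (η v)
          ((classOf η (η u) (η v)).domRestrict η)
      else 0 := by
  by_cases hσ : σ u = σ v
  swap
  · rw [if_neg hσ, if_neg fun h => hσ (h.2.1.trans h.2.2.symm)]
  by_cases hσu : σ u = η u
  swap
  · rw [if_pos hσ, if_neg fun h => hσu h.2.1]
    exact sum_eq_zero fun c' _ => by rw [if_neg fun h => hσu h.2.1.symm, mul_zero]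
  rw [if_pos hσ, moveKernel, hσu,
    sum_eq_single_of_mem (η v) (mem_erase.2 ⟨hne.symm, mem_univ _⟩) fun c' _ hc' => by
      rw [if_neg fun h => hc' h.2.2.symm, mul_zero]]
  by_cases hR : IsRecolouring σ η (η u) (η v)
  · rw [if_pos ⟨hR, rfl, rfl⟩, if_pos ⟨hR.symm, rfl, hσ.symm.trans hσu⟩, hR.classOf_eq]
  · rw [if_neg fun h => hR h.1, if_neg fun h => hR h.1.symm, mul_zero]

lemma sum_pottsP_mul_moveKernel (G : SimpleGraph V) (B : ℝ) {u v : V} {η : V → Fin q}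
    (hne : η u ≠ η v) :
    ∑ σ, pottsP G q B σ * (if σ u = σ v then moveKernel G q B u v σ η else 0) =
      moveProb q B * pottsP G q B η *
        pinnedRatio G B (classOf η (η u) (η v)) u v (η u) (η v) := by
  set U := classOf η (η u) (η v)
  have hu : u ∈ U := Or.inl rfl
  have hv : v ∈ U := Or.inr rfl
  have hη : mEdges G η = mEdges (G.induce U) (U.domRestrict η) +
      mEdges (G.induce Uᶜ) (Uᶜ.domRestrict η) :=
    mEdges_eq_induce_add_induce_compl G U η fun x hx y hy hxy =>
      hy (by show η y = η u ∨ η y = η v; rw [← hxy]; exact hx)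
  simp only [ite_moveKernel_eq G B hne, mul_ite, mul_zero]
  rw [← sum_filter, ← sum_mul]
  simp only [pottsP, ← sum_div]
  rw [sum_pow_mEdges_isRecolouring G B η hu hv, isingCondP_eq, pinnedRatio, hη, pow_add]
  ring

noncomputable def resampleExcess (G : SimpleGraph V) (q : ℕ) (B : ℝ) (u v : V)
    (η : V → Fin q) : ℝ :=
  if η u = η v then 0
  else moveProb q B * pottsP G q B η *
    (pinnedRatio G B (classOf η (η u) (η v)) u v (η u) (η v) - 1)

lemma resampleDist_eq (G : SimpleGraph V) {B : ℝ} (hB : 0 < B) (u v : V) (η : V → Fin q) :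
    resampleDist G q B u v η =
      q / (B + q - 1) * (pottsP G q B η * (if η u = η v then B else 1)) +
        resampleExcess G q B u v η := by
  have hD : (B + q - 1 : ℝ) ≠ 0 := by
    have : (1 : ℝ) ≤ q := by exact_mod_cast (η u).pos
    linarith
  have hkeep : ∑ σ, pottsP G q B σ *
      (if η = σ then (if σ u = σ v then q * B / (B + q - 1) else 1) else 0) =
      pottsP G q B η * (if η u = η v then q * B / (B + q - 1) else 1) := by
    simp only [mul_ite, mul_zero, sum_ite_eq, mem_univ, if_true]
  simp only [resampleDist, resampleKernel_eq, mul_add, sum_add_distrib, hkeep, resampleExcess]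
  by_cases h : η u = η v
  · simp only [h, if_true, moveKernel_eq_zero G B _ h, ite_self, mul_zero, sum_const_zero]
    field_simp
  · simp only [h, if_false, sum_pottsP_mul_moveKernel G B h, moveProb]
    field_simp
    ring

lemma sum_abs_resampleExcess_le (G : SimpleGraph V) (hq : 0 < q) {B : ℝ} (hB : 0 < B)
    (hB1 : B ≤ 1) (u v : V) :
    ∑ η, |resampleExcess G q B u v η| ≤ moveProb q B * expCorr G q B u v := by
  have hmove := moveProb_nonneg hB hB1 hq
  rw [expCorr, mul_sum]
  refine sum_le_sum fun η _ => ?_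
  rw [resampleExcess]
  split_ifs with h
  · have : (0 : ℝ) ≤ (q : ℝ) - 1 := by
      have : (1 : ℝ) ≤ q := by exact_mod_cast hq
      linarith
    rw [abs_zero]
    exact mul_nonneg hmove (mul_nonneg (pottsP_pos G hq hB η).le
      (mul_nonneg (inv_nonneg.2 this) (sum_nonneg fun _ _ => abs_nonneg _)))
  · rw [isingCorr_eq_abs_pinnedRatio_sub_one G B _ u v h, abs_mul, abs_mul,
      abs_of_nonneg hmove, abs_of_pos (pottsP_pos G hq hB η), mul_assoc]

lemma tv_resampleDist_le (G : SimpleGraph V) (hq : 0 < q) {B : ℝ} (hB : 0 < B) (hB1 : B ≤ 1)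
    {u v : V} (huv : u ≠ v) (hadj : ¬ G.Adj u v) :
    (1 / 2) * ∑ η, |resampleDist G q B u v η -
        pottsP (G ⊔ SimpleGraph.fromEdgeSet {s(u, v)}) q B η| ≤
      moveProb q B * expCorr G q B u v := by
  have hp (η : V → Fin q) : 0 < pottsP G q B η * (if η u = η v then B else 1) :=
    mul_pos (pottsP_pos G hq hB η) (by split_ifs <;> linarith)
  have hS : 0 < ∑ η, pottsP G q B η * (if η u = η v then B else 1) :=
    sum_pos (fun η _ => hp η) ⟨fun _ => ⟨0, hq⟩, mem_univ _⟩
  have key := sum_abs_sub_div_sum_le _ (fun η => (hp η).le) hS (resampleDist_eq G hB u v)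
    (sum_resampleDist G hq hB huv)
  simp only [← pottsP_sup_edge G hq hB huv hadj] at key
  linarith [sum_abs_resampleExcess_le G hq hB hB1 u v]

end

theorem stmt19 {V : Type} [Fintype V] (B : ℝ) (hB : B ∈ Set.Ioo (0 : ℝ) 1)
    (q : ℕ) (hq : 3 ≤ q) (ε : ℝ) (hε : ε ∈ Set.Ioo (0 : ℝ) 1)
    (G : SimpleGraph V) (u v : V) (huv : u ≠ v) (hadj : ¬ G.Adj u v)
    (hcorr : expCorr G q B u v ≤ ε) :
    (1 / 2) * ∑ η : V → Fin q,
        |resampleDist G q B u v η -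
          pottsP (G ⊔ SimpleGraph.fromEdgeSet {s(u, v)}) q B η| ≤
      2 * ε / B := by
  obtain ⟨hB0, hB1⟩ := hB
  have hq0 : 0 < q := by omega
  have hmove : moveProb q B ≤ 1 := by
    have : (3 : ℝ) ≤ q := by exact_mod_cast hq
    rw [moveProb, div_le_one (by linarith)]
    linarith
  calc _ ≤ moveProb q B * expCorr G q B u v := tv_resampleDist_le G hq0 hB0 hB1.le huv hadj
    _ ≤ moveProb q B * ε := mul_le_mul_of_nonneg_left hcorr (moveProb_nonneg hB0 hB1.le hq0)
    _ ≤ ε := mul_le_of_le_one_left hε.1.le hmove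
    _ ≤ 2 * ε / B := by
      rw [le_div_iff₀ hB0]
      nlinarith [hε.1]
end
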